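/- Every total order < on the vertex set V of a graph G induces a unique admissible tubing {T_1,…,T_n} of G respecting <, i.e., such that T_i ⊊ T_j implies v_i < v_j, where v_i is the vertex associated to T_i under the canonical bijection. Moreover, every admissible tubing of G arises from some total order on V in this way. -/

import Mathlib

open SimpleGraph

namespace Cosmo

variable {V : Type*}

/-- A tube of `G` is a connected subgraph. -/
def IsTube (G : SimpleGraph V) (T : G.Subgraph) : Prop := T.Connected

/-- Tubes are nested if one contains the other. -/
def Nested {G : SimpleGraph V} (S T : G.Subgraph) : Prop := S ≤ T ∨ T ≤ S

/-- Tubes overlap if their (vertex) intersection is nonempty and they are not nested. -/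
def Overlapping {G : SimpleGraph V} (S T : G.Subgraph) : Prop :=
  (S.verts ∩ T.verts).Nonempty ∧ ¬ Nested S T

/-- Tubes are incompatible if there is an edge of `G` between them and they are not nested. -/
def Incompatible {G : SimpleGraph V} (S T : G.Subgraph) : Prop :=
  (∃ u w, G.Adj u w ∧ u ∈ S.verts ∧ w ∈ T.verts) ∧ ¬ Nested S T

/-- Tubes are compatible if they are not incompatible. -/
def Compatible {G : SimpleGraph V} (S T : G.Subgraph) : Prop := ¬ Incompatible S T

/-- A complete tubing: a maximal collection of pairwise non-overlapping tubes. -/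
def IsCompleteTubing (G : SimpleGraph V) (𝒯 : Set G.Subgraph) : Prop :=
  Maximal (fun 𝒞 : Set G.Subgraph =>
    (∀ T ∈ 𝒞, IsTube G T) ∧ 𝒞.Pairwise fun S T => ¬ Overlapping S T) 𝒯

/-- An admissible tubing: a maximal collection of pairwise compatible induced tubes. -/
def IsAdmissibleTubing (G : SimpleGraph V) (𝒯 : Set G.Subgraph) : Prop :=
  Maximal (fun 𝒞 : Set G.Subgraph =>
    (∀ T ∈ 𝒞, IsTube G T ∧ T.IsInduced) ∧ 𝒞.Pairwise Compatible) 𝒯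

/-- A labeling of an admissible tubing by the vertices, as in the bijection lemma:
`g v` is the tube associated to `v`, i.e. `v ∈ g v` and `v` avoids all strictly
smaller tubes of the tubing. -/
def IsVertexLabeling (G : SimpleGraph V) (𝒯 : Set G.Subgraph) (g : V → G.Subgraph) : Prop :=
  Set.BijOn g Set.univ 𝒯 ∧ ∀ v, v ∈ (g v).verts ∧ ∀ S ∈ 𝒯, S < g v → v ∉ S.verts

end Cosmo

/-!
For a linear order, the tube of `v` is `lowerTube G v`, the component of `v` among the vertices
`≤ v`. An edge between the lower tubes of `u ≤ v` forces the first into the second, so these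
tubes are pairwise compatible, and maximality holds because a tube compatible with all of them
is the lower tube of its largest vertex. Conversely, if the labeling of an admissible tubing
respects the order, the tube labelled `v` is forced to be `lowerTube G v`.

Labelings exist and are unique since every tube of an admissible tubing has exactly one private
vertex, one lying in no smaller tube. Any linear extension of the inclusion order of the tubes,
pulled back along the labeling, is then an order producing the tubing.
-/

namespace SimpleGraph

variable {V : Type*} {G : SimpleGraph V}

namespace Subgraph

lemma IsInduced.le_of_verts_subset {H K : G.Subgraph} (hK : K.IsInduced)
    (h : H.verts ⊆ K.verts) : H ≤ K :=
  le_induce_top_verts.trans (hK.induce_top_verts ▸ induce_mono_right h)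

lemma IsInduced.eq_of_verts_eq {H K : G.Subgraph} (hH : H.IsInduced) (hK : K.IsInduced)
    (h : H.verts = K.verts) : H = K :=
  (hK.le_of_verts_subset h.le).antisymm (hH.le_of_verts_subset h.ge)

lemma isInduced_induce_top (s : Set V) : ((⊤ : G.Subgraph).induce s).IsInduced :=
  (isInduced_iff_exists_eq_induce_top _).2 ⟨s, rfl⟩

lemma Connected.exists_adj_of_mem_of_notMem {H : G.Subgraph} (hH : H.Connected) {s : Set V}
    {x y : V} (hx : x ∈ H.verts) (hxs : x ∈ s) (hy : y ∈ H.verts) (hys : y ∉ s) :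
    ∃ a ∈ H.verts, a ∈ s ∧ ∃ b ∈ H.verts, b ∉ s ∧ G.Adj a b := by
  obtain ⟨p, hp⟩ := (preconnected_iff_forall_exists_walk_subgraph H).1 hH.preconnected hx hy
  obtain ⟨d, hd, hds, hdns⟩ := p.exists_boundary_dart s hxs hys
  have hsupp : ∀ w ∈ p.support, w ∈ H.verts := fun w hw =>
    hp.1 ((Walk.mem_verts_toSubgraph p).2 hw)
  exact ⟨d.fst, hsupp _ (p.dart_fst_mem_support_of_mem_darts hd), hds,
    d.snd, hsupp _ (p.dart_snd_mem_support_of_mem_darts hd), hdns, d.adj⟩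

end Subgraph

/-- The vertex set of the connected component of `u` in the subgraph induced on `A`
(empty when `u ∉ A`). -/
def componentIn (G : SimpleGraph V) (A : Set V) (u : V) : Set V :=
  {z | ∃ H : G.Subgraph, H.Connected ∧ H.verts ⊆ A ∧ u ∈ H.verts ∧ z ∈ H.verts}

variable {A : Set V} {u x y : V}

lemma componentIn_subset : G.componentIn A u ⊆ A :=
  fun _ ⟨_, _, hA, _, hz⟩ => hA hz

lemma mem_componentIn_self (hu : u ∈ A) : u ∈ G.componentIn A u :=
  ⟨G.singletonSubgraph u, Subgraph.singletonSubgraph_connected, by simpa using hu, rfl, rfl⟩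

lemma Subgraph.Connected.verts_subset_componentIn {H : G.Subgraph} (hH : H.Connected)
    (hA : H.verts ⊆ A) (hu : u ∈ H.verts) : H.verts ⊆ G.componentIn A u :=
  fun _ hz => ⟨H, hH, hA, hu, hz⟩

lemma componentIn_subset_componentIn (hx : x ∈ G.componentIn A u) :
    G.componentIn A x ⊆ G.componentIn A u := by
  rintro z ⟨K, hK, hKA, hxK, hzK⟩
  obtain ⟨H, hH, hHA, huH, hxH⟩ := hx
  exact ⟨H ⊔ K, Subgraph.connected_sup hH.preconnected hK.preconnected ⟨x, hxH, hxK⟩,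
    Set.union_subset hHA hKA, Or.inl huH, Or.inr hzK⟩

lemma mem_componentIn_of_adj (hx : x ∈ G.componentIn A u) (hxy : G.Adj x y) (hy : y ∈ A) :
    y ∈ G.componentIn A u := by
  refine componentIn_subset_componentIn hx ⟨G.subgraphOfAdj hxy,
    Subgraph.subgraphOfAdj_connected hxy, ?_, by simp, by simp⟩
  simpa [Set.insert_subset_iff] using ⟨componentIn_subset hx, hy⟩

lemma Subgraph.Connected.verts_subset_componentIn_of_adj {H : G.Subgraph} (hH : H.Connected)
    (hA : H.verts ⊆ A) (hx : x ∈ H.verts) (hy : y ∈ G.componentIn A u) (hxy : G.Adj x y) :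
    H.verts ⊆ G.componentIn A u :=
  (hH.verts_subset_componentIn hA hx).trans
    (componentIn_subset_componentIn (mem_componentIn_of_adj hy hxy.symm (hA hx)))

lemma connected_induce_componentIn (hu : u ∈ A) :
    ((⊤ : G.Subgraph).induce (G.componentIn A u)).Connected := by
  rw [Subgraph.connected_iff_forall_exists_walk_subgraph]
  refine ⟨⟨u, mem_componentIn_self hu⟩, fun {a b} ha hb => ?_⟩
  obtain ⟨H, hH, hHA, huH, haH⟩ := ha
  obtain ⟨K, hK, hKA, huK, hbK⟩ := hb
  have hHK : (H ⊔ K).Connected :=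
    Subgraph.connected_sup hH.preconnected hK.preconnected ⟨u, huH, huK⟩
  have hle : H ⊔ K ≤ (⊤ : G.Subgraph).induce (G.componentIn A u) :=
    (Subgraph.isInduced_induce_top _).le_of_verts_subset
      (hHK.verts_subset_componentIn (Set.union_subset hHA hKA) (Or.inl huH))
  obtain ⟨p, hp⟩ := (Subgraph.preconnected_iff_forall_exists_walk_subgraph _).1
    hHK.preconnected (Or.inl haH) (Or.inr hbK)
  exact ⟨p, hp.trans hle⟩

end SimpleGraph

lemma Function.Injective.exists_linearOrder_lt_of_lt {α β : Type*} [PartialOrder β] {f : α → β}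
    (hf : Function.Injective f) : ∃ r : LinearOrder α, ∀ a b, f a < f b → r.lt a b := by
  let : PartialOrder α := PartialOrder.lift f hf
  exact ⟨LinearOrder.lift' (toLinearExtension : α → LinearExtension α) fun _ _ h => h,
    fun a b hab => (toLinearExtension.monotone.strictMono_of_injective fun _ _ h => h) hab⟩

namespace Cosmo

variable {V : Type*} {G : SimpleGraph V} {𝒯 : Set G.Subgraph}

lemma Compatible.symm {S T : G.Subgraph} (h : Compatible S T) : Compatible T S :=
  fun ⟨⟨u, w, huw, hu, hw⟩, hn⟩ => h ⟨⟨w, u, huw.symm, hw, hu⟩, fun h' => hn h'.symm⟩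

lemma Compatible.nested_of_adj {S T : G.Subgraph} (h : Compatible S T) {u w : V}
    (huw : G.Adj u w) (hu : u ∈ S.verts) (hw : w ∈ T.verts) : Nested S T :=
  not_not.1 fun hn => h ⟨⟨u, w, huw, hu, hw⟩, hn⟩

lemma Compatible.nested_of_mem {S T : G.Subgraph} (h : Compatible S T) (hS : S.Connected)
    (hT : T.IsInduced) {x : V} (hxS : x ∈ S.verts) (hxT : x ∈ T.verts) : Nested S T := by
  by_cases hST : S.verts ⊆ T.verts
  · exact Or.inl (hT.le_of_verts_subset hST)
  obtain ⟨y, hyS, hyT⟩ := Set.not_subset.1 hST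
  obtain ⟨a, -, haT, b, hbS, -, hab⟩ := hS.exists_adj_of_mem_of_notMem hxS hxT hyS hyT
  exact h.nested_of_adj hab.symm hbS haT

def IsPrivate (𝒯 : Set G.Subgraph) (S : G.Subgraph) (v : V) : Prop :=
  v ∈ S.verts ∧ ∀ R ∈ 𝒯, R < S → v ∉ R.verts

namespace IsAdmissibleTubing

lemma connected (h𝒯 : IsAdmissibleTubing G 𝒯) {S : G.Subgraph} (hS : S ∈ 𝒯) : S.Connected :=
  (h𝒯.1.1 S hS).1

lemma isInduced (h𝒯 : IsAdmissibleTubing G 𝒯) {S : G.Subgraph} (hS : S ∈ 𝒯) : S.IsInduced :=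
  (h𝒯.1.1 S hS).2

lemma nested_of_adj (h𝒯 : IsAdmissibleTubing G 𝒯) {S T : G.Subgraph} (hS : S ∈ 𝒯) (hT : T ∈ 𝒯)
    {u w : V} (huw : G.Adj u w) (hu : u ∈ S.verts) (hw : w ∈ T.verts) : Nested S T := by
  obtain rfl | hne := eq_or_ne S T
  · exact Or.inl le_rfl
  · exact (h𝒯.1.2 hS hT hne).nested_of_adj huw hu hw

lemma nested_of_mem (h𝒯 : IsAdmissibleTubing G 𝒯) {S T : G.Subgraph} (hS : S ∈ 𝒯) (hT : T ∈ 𝒯)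
    {x : V} (hxS : x ∈ S.verts) (hxT : x ∈ T.verts) : Nested S T := by
  obtain rfl | hne := eq_or_ne S T
  · exact Or.inl le_rfl
  · exact (h𝒯.1.2 hS hT hne).nested_of_mem (h𝒯.connected hS) (h𝒯.isInduced hT) hxS hxT

lemma mem_of_compatible (h𝒯 : IsAdmissibleTubing G 𝒯) {W : G.Subgraph} (hW : W.Connected)
    (hWi : W.IsInduced) (hcomp : ∀ S ∈ 𝒯, Compatible S W) : W ∈ 𝒯 := by
  refine h𝒯.2 ⟨?_, h𝒯.1.2.insert fun S hS _ => ⟨(hcomp S hS).symm, hcomp S hS⟩⟩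
    (Set.subset_insert _ _) (Set.mem_insert _ _)
  rintro T (rfl | hT)
  exacts [⟨hW, hWi⟩, h𝒯.1.1 T hT]

/-- A tube adjacent to the component and lying inside `A` is absorbed by it. -/
lemma induce_componentIn_mem (h𝒯 : IsAdmissibleTubing G 𝒯) {A : Set V} {u : V} (hu : u ∈ A)
    (h : ∀ R ∈ 𝒯, (∃ x y, G.Adj x y ∧ x ∈ R.verts ∧ y ∈ G.componentIn A u) →
      R.verts ⊆ A ∨ G.componentIn A u ⊆ R.verts) :
    (⊤ : G.Subgraph).induce (G.componentIn A u) ∈ 𝒯 := by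
  have hWi := Subgraph.isInduced_induce_top (G := G) (G.componentIn A u)
  refine h𝒯.mem_of_compatible (connected_induce_componentIn hu) hWi fun R hR => ?_
  rintro ⟨⟨x, y, hxy, hxR, hyW⟩, hn⟩
  refine hn ((h R hR ⟨x, y, hxy, hxR, hyW⟩).imp (fun hRA => ?_) fun hWR => ?_)
  · exact hWi.le_of_verts_subset
      ((h𝒯.connected hR).verts_subset_componentIn_of_adj hRA hxR hyW hxy)
  · exact (h𝒯.isInduced hR).le_of_verts_subset hWR

lemma exists_mem (h𝒯 : IsAdmissibleTubing G 𝒯) (v : V) : ∃ S ∈ 𝒯, v ∈ S.verts :=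
  ⟨_, h𝒯.induce_componentIn_mem (Set.mem_univ v) fun _ _ _ => Or.inl (Set.subset_univ _),
    mem_componentIn_self (Set.mem_univ v)⟩

lemma exists_minimum_mem [Finite V] (h𝒯 : IsAdmissibleTubing G 𝒯) (v : V) :
    ∃ S ∈ 𝒯, v ∈ S.verts ∧ ∀ T ∈ 𝒯, v ∈ T.verts → S ≤ T := by
  obtain ⟨S, hS, hvS⟩ := h𝒯.exists_mem v
  obtain ⟨m, ⟨hm, hvm⟩, hmin⟩ :=
    (Set.toFinite {S ∈ 𝒯 | v ∈ S.verts}).exists_minimal ⟨S, hS, hvS⟩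
  refine ⟨m, hm, hvm, fun T hT hvT => ?_⟩
  rcases h𝒯.nested_of_mem hm hT hvm hvT with h | h
  exacts [h, hmin ⟨hT, hvT⟩ h]

/-- Otherwise a maximal proper subtube `R₀` of `S` is left by an edge of `S` whose other end lies
in another proper subtube, which then has to be nested with `R₀`. -/
lemma exists_isPrivate [Finite V] (h𝒯 : IsAdmissibleTubing G 𝒯) {S : G.Subgraph} (hS : S ∈ 𝒯) :
    ∃ v, IsPrivate 𝒯 S v := by
  by_contra! hcov
  simp only [IsPrivate, not_and, not_forall, not_not, exists_prop] at hcov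
  obtain ⟨x, hxS⟩ := (h𝒯.connected hS).nonempty
  obtain ⟨R, hR, hRS, -⟩ := hcov x hxS
  obtain ⟨R₀, ⟨hR₀, hR₀S⟩, hmax⟩ :=
    (Set.toFinite {R ∈ 𝒯 | R < S}).exists_maximal ⟨R, hR, hRS⟩
  obtain ⟨y, hyS, hyR₀⟩ : ∃ y ∈ S.verts, y ∉ R₀.verts :=
    Set.not_subset.1 fun h => hR₀S.not_ge ((h𝒯.isInduced hR₀).le_of_verts_subset h)
  obtain ⟨x₀, hx₀⟩ := (h𝒯.connected hR₀).nonempty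
  obtain ⟨a, -, haR₀, b, hbS, hbR₀, hab⟩ :=
    (h𝒯.connected hS).exists_adj_of_mem_of_notMem (hR₀S.le.1 hx₀) hx₀ hyS hyR₀
  obtain ⟨R', hR', hR'S, hbR'⟩ := hcov b hbS
  rcases h𝒯.nested_of_adj hR₀ hR' hab haR₀ hbR' with h | h
  · exact hbR₀ ((hmax ⟨hR', hR'S⟩ h).1 hbR')
  · exact hbR₀ (h.1 hbR')

/-- For two private vertices `u ≠ v` of `S`, the component of `u` in `S - v` would be a tube of
the tubing strictly inside `S` containing `u`. -/
lemma isPrivate_unique (h𝒯 : IsAdmissibleTubing G 𝒯) {S : G.Subgraph} (hS : S ∈ 𝒯) {u v : V}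
    (hu : IsPrivate 𝒯 S u) (hv : IsPrivate 𝒯 S v) : u = v := by
  by_contra huv
  set A := S.verts \ {v}
  have huA : u ∈ A := ⟨hu.1, huv⟩
  have hWS : G.componentIn A u ⊆ S.verts := componentIn_subset.trans Set.sdiff_subset
  have hW := h𝒯.induce_componentIn_mem huA fun R hR ⟨x, y, hxy, hxR, hyW⟩ => by
    rcases h𝒯.nested_of_adj hR hS hxy hxR (hWS hyW) with hRS | hSR
    · obtain rfl | hRS := hRS.eq_or_lt
      · exact Or.inr hWS
      · exact Or.inl fun z hz => ⟨hRS.le.1 hz, fun hzv => hv.2 R hR hRS (hzv ▸ hz)⟩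
    · exact Or.inr (hWS.trans hSR.1)
  have hWltS : (⊤ : G.Subgraph).induce (G.componentIn A u) < S := by
    refine lt_of_le_of_ne ((h𝒯.isInduced hS).le_of_verts_subset hWS) fun h => ?_
    rw [← h] at hv
    exact (componentIn_subset hv.1).2 rfl
  exact hu.2 _ hW hWltS (mem_componentIn_self huA)

lemma exists_isVertexLabeling [Finite V] (h𝒯 : IsAdmissibleTubing G 𝒯) :
    ∃ g, IsVertexLabeling G 𝒯 g := by
  choose g hg hvg hmin using h𝒯.exists_minimum_mem
  have hpriv : ∀ v, IsPrivate 𝒯 (g v) v :=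
    fun v => ⟨hvg v, fun R hR hlt hvR => (hmin v R hR hvR).not_gt hlt⟩
  refine ⟨g, ⟨fun v _ => hg v, fun a _ b _ hab => ?_, fun S hS => ?_⟩, hpriv⟩
  · exact h𝒯.isPrivate_unique (hg b) (hab ▸ hpriv a) (hpriv b)
  · obtain ⟨v, hvS, hv⟩ := h𝒯.exists_isPrivate hS
    exact ⟨v, trivial, (hmin v S hS hvS).eq_of_not_lt fun hlt => hv _ (hg v) hlt (hvg v)⟩

end IsAdmissibleTubing

namespace IsVertexLabeling

variable {g g' : V → G.Subgraph}

lemma mem (hg : IsVertexLabeling G 𝒯 g) (v : V) : g v ∈ 𝒯 := hg.1.1 (Set.mem_univ v)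

lemma injective (hg : IsVertexLabeling G 𝒯 g) : Function.Injective g :=
  fun a b h => hg.1.2.1 (Set.mem_univ a) (Set.mem_univ b) h

lemma range_eq (hg : IsVertexLabeling G 𝒯 g) : Set.range g = 𝒯 := by
  rw [← Set.image_univ, hg.1.image_eq]

lemma le_of_mem (h𝒯 : IsAdmissibleTubing G 𝒯) (hg : IsVertexLabeling G 𝒯 g) {u v : V}
    (hu : u ∈ (g v).verts) : g u ≤ g v := by
  rcases h𝒯.nested_of_mem (hg.mem u) (hg.mem v) (hg.2 u).1 hu with h | h
  · exact h
  · exact (h.eq_or_lt.resolve_right fun hlt => (hg.2 u).2 _ (hg.mem v) hlt hu).ge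

lemma unique (h𝒯 : IsAdmissibleTubing G 𝒯) (hg : IsVertexLabeling G 𝒯 g)
    (hg' : IsVertexLabeling G 𝒯 g') : g = g' :=
  funext fun v => by
    rcases h𝒯.nested_of_mem (hg.mem v) (hg'.mem v) (hg.2 v).1 (hg'.2 v).1 with h | h
    · exact h.eq_of_not_lt fun hlt => (hg'.2 v).2 _ (hg.mem v) hlt (hg.2 v).1
    · exact (h.eq_of_not_lt fun hlt => (hg.2 v).2 _ (hg'.mem v) hlt (hg'.2 v).1).symm

end IsVertexLabeling

section LinearOrder

variable [LinearOrder V] (G)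

def lowerTube (v : V) : G.Subgraph := (⊤ : G.Subgraph).induce (G.componentIn (Set.Iic v) v)

def lowerTubing : Set G.Subgraph := Set.range (lowerTube G)

variable {G} {u v x y : V}

lemma mem_lowerTube_self (v : V) : v ∈ (lowerTube G v).verts :=
  mem_componentIn_self Set.self_mem_Iic

lemma le_of_mem_lowerTube (h : u ∈ (lowerTube G v).verts) : u ≤ v :=
  (componentIn_subset h : u ∈ Set.Iic v)

lemma lowerTube_connected (v : V) : (lowerTube G v).Connected :=
  connected_induce_componentIn Set.self_mem_Iic

lemma lowerTube_isInduced (v : V) : (lowerTube G v).IsInduced := Subgraph.isInduced_induce_top _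

lemma lowerTube_injective : Function.Injective (lowerTube G) := fun u v h =>
  (le_of_mem_lowerTube (h ▸ mem_lowerTube_self u)).antisymm
    (le_of_mem_lowerTube (h ▸ mem_lowerTube_self v))

lemma lt_of_lowerTube_lt (h : lowerTube G u < lowerTube G v) : u < v :=
  (le_of_mem_lowerTube (h.le.1 (mem_lowerTube_self u))).lt_of_ne (by rintro rfl; exact h.ne rfl)

lemma le_lowerTube {W : G.Subgraph} (hW : W.Connected) (hv : v ∈ W.verts)
    (hle : ∀ z ∈ W.verts, z ≤ v) : W ≤ lowerTube G v :=
  (lowerTube_isInduced v).le_of_verts_subset (hW.verts_subset_componentIn hle hv)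

lemma lowerTube_le_of_adj (huv : u ≤ v) (hx : x ∈ (lowerTube G u).verts)
    (hy : y ∈ (lowerTube G v).verts) (hxy : G.Adj x y) : lowerTube G u ≤ lowerTube G v :=
  (lowerTube_isInduced v).le_of_verts_subset <|
    (lowerTube_connected u).verts_subset_componentIn_of_adj
      (fun _ hz => (le_of_mem_lowerTube hz).trans huv) hx hy hxy

lemma lowerTube_compatible (u v : V) : Compatible (lowerTube G u) (lowerTube G v) := by
  rintro ⟨⟨x, y, hxy, hx, hy⟩, hn⟩
  rcases le_total u v with h | h
  · exact hn (Or.inl (lowerTube_le_of_adj h hx hy hxy))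
  · exact hn (Or.inr (lowerTube_le_of_adj h hy hx hxy.symm))

/-- A tube compatible with all lower tubes is the lower tube of its largest vertex `v`: an edge
leaving it inside `lowerTube G v` would reach a smaller vertex `b` whose lower tube is not nested
with it. -/
lemma exists_lowerTube_eq [Finite V] {W : G.Subgraph} (hW : W.Connected) (hWi : W.IsInduced)
    (hcomp : ∀ v, W ≠ lowerTube G v → Compatible W (lowerTube G v)) : ∃ v, lowerTube G v = W := by
  obtain ⟨v, hvW, hvmax⟩ := W.verts.exists_max_image id (Set.toFinite _) hW.nonempty
  have hle : W ≤ lowerTube G v := le_lowerTube hW hvW hvmax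
  refine ⟨v, (hWi.eq_of_verts_eq (lowerTube_isInduced v) (hle.1.antisymm ?_)).symm⟩
  by_contra hsub
  obtain ⟨y, hyT, hyW⟩ := Set.not_subset.1 hsub
  obtain ⟨a, -, haW, b, hbT, hbW, hab⟩ :=
    (lowerTube_connected v).exists_adj_of_mem_of_notMem (hle.1 hvW) hvW hyT hyW
  have hbv : b < v := (le_of_mem_lowerTube hbT).lt_of_ne (by rintro rfl; exact hbW hvW)
  have hWb : W ≠ lowerTube G b := by rintro rfl; exact hbW (mem_lowerTube_self b)
  rcases (hcomp b hWb).nested_of_adj hab haW (mem_lowerTube_self b) with h | h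
  · exact (le_of_mem_lowerTube (h.1 hvW)).not_gt hbv
  · exact hbW (h.1 (mem_lowerTube_self b))

lemma isAdmissibleTubing_lowerTubing [Finite V] : IsAdmissibleTubing G (lowerTubing G) := by
  refine ⟨⟨?_, ?_⟩, fun 𝒞 ⟨h𝒞, hcomp⟩ hsub W hW => ?_⟩
  · rintro _ ⟨v, rfl⟩
    exact ⟨lowerTube_connected v, lowerTube_isInduced v⟩
  · rintro _ ⟨u, rfl⟩ _ ⟨v, rfl⟩ -
    exact lowerTube_compatible u v
  · exact exists_lowerTube_eq (h𝒞 W hW).1 (h𝒞 W hW).2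
      fun v hne => hcomp hW (hsub ⟨v, rfl⟩) hne

lemma isVertexLabeling_lowerTube : IsVertexLabeling G (lowerTubing G) (lowerTube G) := by
  refine ⟨⟨fun v _ => ⟨v, rfl⟩, lowerTube_injective.injOn, ?_⟩,
    fun v => ⟨mem_lowerTube_self v, ?_⟩⟩
  · rintro _ ⟨v, rfl⟩
    exact ⟨v, trivial, rfl⟩
  · rintro _ ⟨u, rfl⟩ hlt hv
    exact (le_of_mem_lowerTube hv).not_gt (lt_of_lowerTube_lt hlt)

/-- The tube labelled `v` contains only vertices below `v`, so lies in `lowerTube G v`; an edge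
leaving it inside `lowerTube G v` would reach a vertex `c < v` whose tube is not nested with it. -/
lemma IsVertexLabeling.eq_lowerTube {g : V → G.Subgraph} (h𝒯 : IsAdmissibleTubing G 𝒯)
    (hg : IsVertexLabeling G 𝒯 g) (hr : ∀ u v, g u < g v → u < v) : g = lowerTube G := by
  funext v
  have hbelow : ∀ z ∈ (g v).verts, z ≤ v := fun z hz =>
    (hg.le_of_mem h𝒯 hz).eq_or_lt.elim (fun h => (hg.injective h).le) fun h => (hr z v h).le
  have hle : g v ≤ lowerTube G v := le_lowerTube (h𝒯.connected (hg.mem v)) (hg.2 v).1 hbelow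
  refine (h𝒯.isInduced (hg.mem v)).eq_of_verts_eq (lowerTube_isInduced v) (hle.1.antisymm ?_)
  by_contra hsub
  obtain ⟨y, hyT, hyg⟩ := Set.not_subset.1 hsub
  obtain ⟨a, -, hag, c, hcT, hcg, hac⟩ :=
    (lowerTube_connected v).exists_adj_of_mem_of_notMem (hle.1 (hg.2 v).1) (hg.2 v).1 hyT hyg
  rcases h𝒯.nested_of_adj (hg.mem v) (hg.mem c) hac hag (hg.2 c).1 with h | h
  · have hlt : g v < g c := h.lt_of_ne (by rintro h; exact hcg (h ▸ (hg.2 c).1))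
    exact (le_of_mem_lowerTube hcT).not_gt (hr v c hlt)
  · exact hcg (h.1 (hg.2 c).1)

end LinearOrder

/-- every total order on the vertices induces a unique admissible tubing
respecting it (strictly smaller tubes have smaller associated vertices), and every
admissible tubing arises from some total order in this way. -/
theorem admissibleTubing_of_linearOrder {V : Type*} [Fintype V] (G : SimpleGraph V) :
    (∀ r : LinearOrder V, ∃! 𝒯 : Set G.Subgraph, IsAdmissibleTubing G 𝒯 ∧
        ∀ g : V → G.Subgraph, IsVertexLabeling G 𝒯 g →
          ∀ u v : V, g u < g v → r.lt u v) ∧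
    (∀ 𝒯 : Set G.Subgraph, IsAdmissibleTubing G 𝒯 →
      ∃ r : LinearOrder V,
        ∀ g : V → G.Subgraph, IsVertexLabeling G 𝒯 g →
          ∀ u v : V, g u < g v → r.lt u v) := by
  refine ⟨fun r => ?_, fun 𝒯 h𝒯 => ?_⟩
  · let := r
    refine ⟨lowerTubing G, ⟨isAdmissibleTubing_lowerTubing, fun g hg u v huv => ?_⟩, ?_⟩
    · rw [hg.unique isAdmissibleTubing_lowerTubing isVertexLabeling_lowerTube] at huv
      exact lt_of_lowerTube_lt huv
    · rintro 𝒯 ⟨h𝒯, hr⟩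
      obtain ⟨g, hg⟩ := h𝒯.exists_isVertexLabeling
      rw [← hg.range_eq, hg.eq_lowerTube h𝒯 (hr g hg), lowerTubing]
  · obtain ⟨g, hg⟩ := h𝒯.exists_isVertexLabeling
    obtain ⟨r, hr⟩ := hg.injective.exists_linearOrder_lt_of_lt
    exact ⟨r, fun g' hg' => hg'.unique h𝒯 hg ▸ hr⟩

end Cosmo
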